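/- The Petersen graph does not admit a 2-bisection: there is no partition of its 10 vertices into two classes of size 5 such that every connected component of the subgraph induced by either class has at most 2 vertices. -/

import Mathlib

/-- Vertices of the Petersen graph: 2-element subsets of {1,...,5} (modelled as `Fin 5`). -/
abbrev PetersenVert : Type := {p : Finset (Fin 5) // p.card = 2}

/-- The Petersen graph as the Kneser graph K(5,2): two 2-subsets are adjacent iff disjoint. -/
def Petersen : SimpleGraph PetersenVert where
  Adj a b := Disjoint a.1 b.1
  symm := ⟨fun _ _ h => Disjoint.symm h⟩
  loopless := by
    refine ⟨?_⟩
    intro a h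
    have ha : a.1 = ∅ := by simpa using disjoint_self.mp h
    have := a.2
    rw [ha] at this
    simp at this

/-- A 2-bisection of `G`: a 2-colouring of the vertices (colour classes `c v = 0` and
`c v = 1`) with colour classes of equal size such that every connected component of the
subgraph induced by each colour class has at most 2 vertices. -/
def TwoBisection {V : Type*} [Fintype V] (G : SimpleGraph V) (c : V → Fin 2) : Prop :=
  (Finset.univ.filter fun v => c v = 0).card = (Finset.univ.filter fun v => c v = 1).card ∧
  ∀ i : Fin 2, ∀ K : (G.induce {v | c v = i}).ConnectedComponent, K.supp.ncard ≤ 2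

/-!
In a 2-bisection no vertex has two neighbours of its own colour, since such a monochromatic
path on three vertices would lie in a single component of its colour class. An exhaustive
search over the 2¹⁰ colourings of the Petersen graph shows that every balanced one has such a
vertex.
-/

theorem SimpleGraph.eq_of_adj_of_adj_of_ncard_supp_le_two {V : Type*} [Finite V]
    {G : SimpleGraph V} (h : ∀ K : G.ConnectedComponent, K.supp.ncard ≤ 2) {u v w : V}
    (hu : G.Adj v u) (hw : G.Adj v w) : u = w := by
  by_contra huw
  have hsub : ({u, v, w} : Set V) ⊆ (G.connectedComponentMk v).supp := by
    rintro x (rfl | rfl | rfl)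
    · exact ConnectedComponent.sound hu.reachable.symm
    · rfl
    · exact ConnectedComponent.sound hw.reachable.symm
  have hcard : ({u, v, w} : Set V).ncard = 3 :=
    Set.ncard_eq_three.mpr ⟨u, v, w, hu.ne', huw, hw.ne, rfl⟩
  have := (Set.ncard_le_ncard hsub (Set.toFinite _)).trans (h _)
  omega

theorem TwoBisection.eq_of_adj_of_adj {V : Type*} [Fintype V] {G : SimpleGraph V}
    {c : V → Fin 2} (hc : TwoBisection G c) {u v w : V} (hu : G.Adj v u) (hw : G.Adj v w)
    (hcu : c u = c v) (hcw : c w = c v) : u = w :=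
  congrArg Subtype.val <|
    (G.induce {x | c x = c v}).eq_of_adj_of_adj_of_ncard_supp_le_two (hc.2 (c v))
      (u := ⟨u, hcu⟩) (v := ⟨v, rfl⟩) (w := ⟨w, hcw⟩) hu hw

instance : DecidableRel Petersen.Adj := fun a b => inferInstanceAs (Decidable (Disjoint a.1 b.1))

theorem Petersen.exists_monochromatic_cherry : ∀ c : PetersenVert → Fin 2,
    (Finset.univ.filter fun v => c v = 0).card = (Finset.univ.filter fun v => c v = 1).card →
    ∃ v u w, Petersen.Adj v u ∧ Petersen.Adj v w ∧ u ≠ w ∧ c u = c v ∧ c w = c v := by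
  decide +kernel

/-- The Petersen graph does not admit a 2-bisection: there is no partition of its 10
vertices into two classes of size 5 such that every connected component of the subgraph
induced by either class has at most 2 vertices. -/
theorem petersen_no_two_bisection : ¬ ∃ c : PetersenVert → Fin 2, TwoBisection Petersen c := by
  rintro ⟨c, hc⟩
  obtain ⟨v, u, w, hu, hw, huw, hcu, hcw⟩ := Petersen.exists_monochromatic_cherry c hc.1
  exact huw (hc.eq_of_adj_of_adj hu hw hcu hcw)
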